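/- Let A ∈ ℝ^{m×n} and λ > 0. If the sum of the singular values of A (its nuclear norm) is at most λ, then X = 0 is the unique minimizer over X ∈ ℝ^{m×n} of the function (1/2)‖A − X‖_F² + λ‖X‖₂. -/

import Mathlib

/-! `X ↦ ½‖A - X‖_F² + λ‖X‖₂` exceeds its value at `0` by `½‖X‖_F² - ⟨A, X⟩_F + λ‖X‖₂`, so it
suffices that `⟨A, X⟩_F ≤ ‖A‖_* ‖X‖₂`, the duality of the nuclear and spectral norms. Computing the
trace `⟨A, X⟩_F = tr (AᵀX)` in an orthonormal eigenbasis `(v_k)` of `AᵀA` gives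
`⟨A, X⟩_F = ∑ₖ ⟨A v_k, X v_k⟩ ≤ ∑ₖ ‖A v_k‖ ‖X‖₂`, and `‖A v_k‖` is the `k`-th singular value. -/

open Matrix

/-- The spectral norm (largest singular value) of a real matrix, defined as the
operator norm of the induced linear map between Euclidean spaces. -/
noncomputable def matrixSpectralNorm {m n : ℕ} (A : Matrix (Fin m) (Fin n) ℝ) : ℝ :=
  ‖LinearMap.toContinuousLinearMap (Matrix.toEuclideanLin A)‖

/-- The Frobenius norm of a real matrix. -/
noncomputable def frobNorm {m n : ℕ} (A : Matrix (Fin m) (Fin n) ℝ) : ℝ :=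
  Real.sqrt (∑ i, ∑ j, (A i j) ^ 2)

open scoped InnerProductSpace

section EuclideanLin

variable {𝕜 m n ι : Type*} [RCLike 𝕜] [Fintype m] [DecidableEq m] [Fintype n] [DecidableEq n]

theorem Matrix.trace_conjTranspose_mul_eq_sum_inner [Fintype ι] (A X : Matrix m n 𝕜)
    (b : OrthonormalBasis ι 𝕜 (EuclideanSpace 𝕜 n)) :
    (Aᴴ * X).trace = ∑ k, ⟪toEuclideanLin A (b k), toEuclideanLin X (b k)⟫_𝕜 := by
  rw [← trace_toLin_eq _ (EuclideanSpace.basisFun n 𝕜).toBasis,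
    ← toEuclideanLin_eq_toLin_orthonormal, LinearMap.trace_eq_sum_inner _ b]
  simp only [toLpLin_mul_same, LinearMap.comp_apply, toEuclideanLin_conjTranspose_eq_adjoint,
    LinearMap.adjoint_inner_right]

theorem Matrix.IsHermitian.norm_toEuclideanLin_eigenvectorBasis {A : Matrix m n ℝ}
    (hH : (Aᵀ * A).IsHermitian) (k : n) :
    ‖toEuclideanLin A (hH.eigenvectorBasis k)‖ = √(hH.eigenvalues k) := by
  set v := hH.eigenvectorBasis k
  have hv : toEuclideanLin (Aᵀ * A) v = hH.eigenvalues k • v := by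
    ext1
    simp [toLpLin_apply, hH.mulVec_eigenvectorBasis, v]
  have hsq : ‖toEuclideanLin A v‖ ^ 2 = hH.eigenvalues k := by
    rw [← real_inner_self_eq_norm_sq, ← LinearMap.adjoint_inner_right,
      ← toEuclideanLin_conjTranspose_eq_adjoint, conjTranspose_eq_transpose_of_trivial,
      ← LinearMap.comp_apply, ← toLpLin_mul_same, hv, inner_smul_right,
      real_inner_self_eq_norm_sq, hH.eigenvectorBasis.orthonormal.1 k]
    simp
  rw [← hsq, Real.sqrt_sq (norm_nonneg _)]

end EuclideanLin

section FinMatrix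

variable {m n : ℕ}

theorem frobNorm_sq (A : Matrix (Fin m) (Fin n) ℝ) : frobNorm A ^ 2 = ∑ i, ∑ j, A i j ^ 2 :=
  Real.sq_sqrt (by positivity)

theorem frobNorm_sub_sq (A X : Matrix (Fin m) (Fin n) ℝ) :
    frobNorm (A - X) ^ 2 = frobNorm A ^ 2 - 2 * (Aᵀ * X).trace + frobNorm X ^ 2 := by
  simp only [frobNorm_sq, trace, diag, mul_apply, transpose_apply, Matrix.sub_apply]
  rw [Finset.sum_comm (f := fun j i => A i j * X i j)]
  simp only [Finset.mul_sum, ← Finset.sum_sub_distrib, ← Finset.sum_add_distrib]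
  congr! 2
  ring

theorem frobNorm_pos {X : Matrix (Fin m) (Fin n) ℝ} (hX : X ≠ 0) : 0 < frobNorm X := by
  refine Real.sqrt_pos.mpr (lt_of_le_of_ne (by positivity) (Ne.symm fun h => hX ?_))
  ext i j
  have hrow := (Finset.sum_eq_zero_iff_of_nonneg (fun i _ => by positivity)).mp h i
    (Finset.mem_univ i)
  simpa using (Finset.sum_eq_zero_iff_of_nonneg (fun j _ => by positivity)).mp hrow j
    (Finset.mem_univ j)

theorem matrixSpectralNorm_zero : matrixSpectralNorm (0 : Matrix (Fin m) (Fin n) ℝ) = 0 := by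
  simp [matrixSpectralNorm]

theorem matrixSpectralNorm_nonneg (X : Matrix (Fin m) (Fin n) ℝ) : 0 ≤ matrixSpectralNorm X :=
  norm_nonneg _

theorem norm_toEuclideanLin_apply_le (X : Matrix (Fin m) (Fin n) ℝ)
    (w : EuclideanSpace ℝ (Fin n)) :
    ‖toEuclideanLin X w‖ ≤ matrixSpectralNorm X * ‖w‖ :=
  (LinearMap.toContinuousLinearMap (toEuclideanLin X)).le_opNorm w

theorem trace_transpose_mul_le_sum_sqrt_eigenvalues_mul_matrixSpectralNorm
    {A : Matrix (Fin m) (Fin n) ℝ} (hH : (Aᵀ * A).IsHermitian) (X : Matrix (Fin m) (Fin n) ℝ) :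
    (Aᵀ * X).trace ≤ (∑ k, √(hH.eigenvalues k)) * matrixSpectralNorm X := by
  have htrace := trace_conjTranspose_mul_eq_sum_inner A X hH.eigenvectorBasis
  rw [conjTranspose_eq_transpose_of_trivial] at htrace
  rw [htrace, Finset.sum_mul]
  gcongr with k
  have hAv := hH.norm_toEuclideanLin_eigenvectorBasis k
  have hXv := norm_toEuclideanLin_apply_le X (hH.eigenvectorBasis k)
  rw [hH.eigenvectorBasis.orthonormal.1 k, mul_one] at hXv
  set v := hH.eigenvectorBasis k
  calc _ ≤ ‖toEuclideanLin A v‖ * ‖toEuclideanLin X v‖ := real_inner_le_norm _ _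
    _ ≤ √(hH.eigenvalues k) * matrixSpectralNorm X := by rw [hAv]; gcongr

end FinMatrix

theorem prox_spectralNorm_eq_zero_of_nuclearNorm_le_general (m n : ℕ)
    (A : Matrix (Fin m) (Fin n) ℝ) (lam : ℝ)
    (hH : (Aᵀ * A).IsHermitian)
    (hnuc : ∑ i, Real.sqrt (hH.eigenvalues i) ≤ lam) :
    ∀ X : Matrix (Fin m) (Fin n) ℝ, X ≠ 0 →
      (1 / 2) * frobNorm (A - 0) ^ 2 + lam * matrixSpectralNorm (0 : Matrix (Fin m) (Fin n) ℝ)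
        < (1 / 2) * frobNorm (A - X) ^ 2 + lam * matrixSpectralNorm X := by
  intro X hX
  have hdual := trace_transpose_mul_le_sum_sqrt_eigenvalues_mul_matrixSpectralNorm hH X
  have hnuc_mul := mul_le_mul_of_nonneg_right hnuc (matrixSpectralNorm_nonneg X)
  have hXpos := frobNorm_pos hX
  rw [sub_zero, matrixSpectralNorm_zero, mul_zero, add_zero, frobNorm_sub_sq]
  nlinarith

/-- If the nuclear norm of `A` (the sum of its singular values, i.e. of the square roots of
the eigenvalues of `AᵀA`) is at most `λ`, then `X = 0` is the unique minimizer of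
`X ↦ (1/2)‖A - X‖_F² + λ‖X‖₂`. -/
theorem prox_spectralNorm_eq_zero_of_nuclearNorm_le (m n : ℕ)
    (A : Matrix (Fin m) (Fin n) ℝ) (lam : ℝ) (hlam : 0 < lam)
    (hH : (Aᵀ * A).IsHermitian)
    (hnuc : ∑ i, Real.sqrt (hH.eigenvalues i) ≤ lam) :
    ∀ X : Matrix (Fin m) (Fin n) ℝ, X ≠ 0 →
      (1 / 2) * frobNorm (A - 0) ^ 2 + lam * matrixSpectralNorm (0 : Matrix (Fin m) (Fin n) ℝ)
        < (1 / 2) * frobNorm (A - X) ^ 2 + lam * matrixSpectralNorm X :=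
  prox_spectralNorm_eq_zero_of_nuclearNorm_le_general m n A lam hH hnuc
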